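/- Let k ≥ 1 and let H, H' be simple hypergraphs. Then H and H' are homomorphism indistinguishable over the class GHW_k of all hypergraphs of generalised hypertree width at most k if and only if they are homomorphism indistinguishable over the class SGHW_k of all simple hypergraphs of generalised hypertree width at most k. -/

import Mathlib

set_option autoImplicit false

noncomputable section

/-! ### Incidence graphs -/

/-- An incidence graph: finite sets of red nodes and blue nodes (realised as two
disjoint finite types), edges from blue nodes to red nodes, every red node adjacent
to at least one blue node. -/
structure IncGraph where
  R : Type
  B : Type
  [finR : Finite R]
  [finB : Finite B]
  E : B → R → Prop
  covered : ∀ v : R, ∃ e : B, E e v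

attribute [instance] IncGraph.finR IncGraph.finB

/-- The neighbourhood of a blue node. -/
def IncGraph.nbhd (I : IncGraph) (e : I.B) : Set I.R := {v | I.E e v}

/-- Homomorphisms between incidence graphs. -/
def IncHom (J I : IncGraph) : Type :=
  {h : (J.R → I.R) × (J.B → I.B) // ∀ e v, J.E e v → I.E (h.2 e) (h.1 v)}

/-- The number of homomorphisms between incidence graphs. -/
def homCount (J I : IncGraph) : ℕ := Nat.card (IncHom J I)

/-- Homomorphism indistinguishability over a class of incidence graphs. -/
def HomIndist (C : Set IncGraph) (I I' : IncGraph) : Prop :=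
  ∀ J ∈ C, homCount J I = homCount J I'

/-- Isomorphism of incidence graphs. -/
def IncIso (I I' : IncGraph) : Prop :=
  ∃ (πR : I.R ≃ I'.R) (πB : I.B ≃ I'.B), ∀ e v, I.E e v ↔ I'.E (πB e) (πR v)

/-! ### Hypergraphs -/

structure HGraph where
  V : Type
  Edge : Type
  [finV : Finite V]
  [finE : Finite Edge]
  f : Edge → Set V
  covered : ∀ v : V, ∃ e : Edge, v ∈ f e

attribute [instance] HGraph.finV HGraph.finE

/-- A hypergraph is simple if its incidence function is injective. -/
def HGraph.Simple (H : HGraph) : Prop := Function.Injective H.f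

/-- The incidence graph of a hypergraph. -/
def HGraph.inc (H : HGraph) : IncGraph where
  R := H.V
  B := H.Edge
  E := fun e v => v ∈ H.f e
  covered := H.covered

/-- Homomorphisms between hypergraphs. -/
def HypHom (F H : HGraph) : Type :=
  {h : (F.V → H.V) × (F.Edge → H.Edge) // ∀ e, H.f (h.2 e) = h.1 '' F.f e}

/-- The number of homomorphisms between hypergraphs. -/
def hhomCount (F H : HGraph) : ℕ := Nat.card (HypHom F H)

/-- Homomorphism indistinguishability over a class of hypergraphs. -/
def HypHomIndist (C : Set HGraph) (H H' : HGraph) : Prop :=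
  ∀ F ∈ C, hhomCount F H = hhomCount F H'

/-! ### Hypertree decompositions -/

/-- A complete generalised hypertree decomposition of an incidence graph. -/
structure GHD (I : IncGraph) where
  T : Type
  [finT : Finite T]
  tr : SimpleGraph T
  isTree : tr.IsTree
  Bag : T → Set I.R
  Cover : T → Set I.B
  complete : ∀ e : I.B, ∃ t, I.nbhd e ⊆ Bag t ∧ e ∈ Cover t
  connR : ∀ v : I.R, (tr.induce {t | v ∈ Bag t}).Connected
  covering : ∀ t, Bag t ⊆ ⋃ e ∈ Cover t, I.nbhd e

attribute [instance] GHD.finT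

/-- The decomposition has width at most `k`. -/
def GHD.widthLe {I : IncGraph} (D : GHD I) (k : ℕ) : Prop :=
  ∀ t, (D.Cover t).ncard ≤ k

/-- An entangled hypertree decomposition. -/
structure EHD (I : IncGraph) extends GHD I where
  precise : ∀ t, (⋃ e ∈ Cover t, I.nbhd e) = Bag t
  connB : ∀ e : I.B, (tr.induce {t | e ∈ Cover t}).Connected

/-- Incidence graphs of generalised hypertree width at most `k`. -/
def IGHW (k : ℕ) : Set IncGraph := {I | ∃ D : GHD I, D.widthLe k}

/-- Incidence graphs of entangled hypertree width at most `k`. -/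
def IEHW (k : ℕ) : Set IncGraph := {I | ∃ D : EHD I, D.toGHD.widthLe k}

/-- Hypergraphs of generalised hypertree width at most `k`. -/
def GHWclass (k : ℕ) : Set HGraph := {H | H.inc ∈ IGHW k}

/-- Simple hypergraphs of generalised hypertree width at most `k`. -/
def SGHWclass (k : ℕ) : Set HGraph := {H | H.Simple ∧ H.inc ∈ IGHW k}

/-- Adding `n` fresh blue nodes whose neighbourhood is exactly `s`. -/
def IncGraph.addBlue (J : IncGraph) (s : Set J.R) (n : ℕ) : IncGraph where
  R := J.R
  B := J.B ⊕ Fin n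
  E := fun e v => Sum.elim (fun e₁ => J.E e₁ v) (fun _ => v ∈ s) e
  covered := fun v => by
    obtain ⟨e, he⟩ := J.covered v
    exact ⟨Sum.inl e, he⟩

/-! ### Guard functions -/

/-- A guard function: a partial map from red-variable indices to `[k]`
with finite domain. -/
structure GuardF (k : ℕ) where
  f : ℕ → Option (Fin k)
  fin : {i | (f i).isSome}.Finite

namespace GuardF

variable {k : ℕ}

/-- The domain of a guard function. -/
def dom (g : GuardF k) : Finset ℕ := g.fin.toFinset

open Classical in
/-- The image of a guard function. -/
def img (g : GuardF k) : Finset (Fin k) :=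
  Finset.univ.filter fun j => ∃ i, g.f i = some j

theorem mem_dom {g : GuardF k} {i : ℕ} : i ∈ g.dom ↔ (g.f i).isSome := by
  simp [dom, Set.Finite.mem_toFinset]

theorem mem_img {g : GuardF k} {j : Fin k} : j ∈ g.img ↔ ∃ i, g.f i = some j := by
  classical
  simp [img]

/-- Union of two guard functions (the first takes precedence). -/
def union (g₁ g₂ : GuardF k) : GuardF k where
  f := fun i => (g₁.f i).or (g₂.f i)
  fin := by
    apply (g₁.fin.union g₂.fin).subset
    intro i hi
    simp only [Set.mem_setOf_eq, Option.isSome_or, Bool.or_eq_true] at hi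
    exact hi

/-- Removing a set of indices from the domain of a guard function. -/
def remove (g : GuardF k) (s : Finset ℕ) : GuardF k where
  f := fun i => if i ∈ s then none else g.f i
  fin := by
    apply g.fin.subset
    intro i hi
    simp only [Set.mem_setOf_eq] at hi ⊢
    by_cases h : i ∈ s
    · simp [h] at hi
    · simpa [h] using hi

/-- Two guard functions are compatible if they agree on the intersection
of their domains. -/
def Compatible (g₁ g₂ : GuardF k) : Prop :=
  ∀ i j₁ j₂, g₁.f i = some j₁ → g₂.f i = some j₂ → j₁ = j₂

/-- `f` is a transition for `g`. -/
def IsTransition (g f : GuardF k) : Prop :=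
  f.dom.Nonempty ∧ (∀ i, (f.f i).isSome → (g.f i).isSome) ∧
    ∀ i j, g.f i = some j → j ∈ f.img → (f.f i).isSome

/-- `g ⊆ g'` for guard functions. -/
def le (g g' : GuardF k) : Prop := ∀ i j, g.f i = some j → g'.f i = some j

end GuardF

/-! ### The logic GC^k -/

/-- Raw syntax of the two-sorted counting logic with guards. Quantifiers carry
the guard function used to guard the quantified formula. -/
inductive Fml (k : ℕ) : Type where
  | top : Fml k
  | E (j : Fin k) (i : ℕ) : Fml k
  | beq (j j' : Fin k) : Fml k
  | req (i i' : ℕ) : Fml k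
  | not (ψ : Fml k) : Fml k
  | and (ψ₁ ψ₂ : Fml k) : Fml k
  | exR (n : ℕ) (s : Finset ℕ) (g : GuardF k) (ψ : Fml k) : Fml k
  | exB (n : ℕ) (s : Finset (Fin k)) (g : GuardF k) (ψ : Fml k) : Fml k

/-- Indices of free red variables of a formula.  For the quantified formulas the
quantified body is `(α_g ∧ ψ)`. -/
def freeR {k : ℕ} : Fml k → Finset ℕ
  | .top => ∅
  | .E _ i => {i}
  | .beq _ _ => ∅
  | .req i i' => {i, i'}
  | .not ψ => freeR ψ
  | .and ψ₁ ψ₂ => freeR ψ₁ ∪ freeR ψ₂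
  | .exR _ s g ψ => (g.dom ∪ freeR ψ) \ s
  | .exB _ _ g ψ => g.dom ∪ freeR ψ

/-- Indices of free blue variables of a formula. -/
def freeB {k : ℕ} : Fml k → Finset (Fin k)
  | .top => ∅
  | .E j _ => {j}
  | .beq j j' => {j, j'}
  | .req _ _ => ∅
  | .not ψ => freeB ψ
  | .and ψ₁ ψ₂ => freeB ψ₁ ∪ freeB ψ₂
  | .exR _ _ g ψ => g.img ∪ freeB ψ
  | .exB _ s g ψ => (g.img ∪ freeB ψ) \ s

/-- Updating a red assignment on the variables in `s`. -/
def updR {R : Type} (βR : ℕ → R) (s : Finset ℕ) (a : ↥s → R) : ℕ → R :=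
  fun i => if h : i ∈ s then a ⟨i, h⟩ else βR i

/-- Updating a blue assignment on the variables in `s`. -/
def updB {k : ℕ} {B : Type} (βB : Fin k → B) (s : Finset (Fin k)) (a : ↥s → B) : Fin k → B :=
  fun j => if h : j ∈ s then a ⟨j, h⟩ else βB j

/-- Satisfaction of the guard formula `α_g` in an interpretation. -/
def GuardSat {k : ℕ} (I : IncGraph) (βB : Fin k → I.B) (βR : ℕ → I.R) (g : GuardF k) : Prop :=
  ∀ i j, g.f i = some j → I.E (βB j) (βR i)

/-- Satisfaction of a formula in an interpretation `(I, β)`. -/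
def FmlSat {k : ℕ} (I : IncGraph) : Fml k → (Fin k → I.B) → (ℕ → I.R) → Prop
  | Fml.top, _, _ => True
  | Fml.E j i, βB, βR => I.E (βB j) (βR i)
  | Fml.beq j j', βB, _ => βB j = βB j'
  | Fml.req i i', _, βR => βR i = βR i'
  | Fml.not ψ, βB, βR => ¬ FmlSat I ψ βB βR
  | Fml.and ψ₁ ψ₂, βB, βR => FmlSat I ψ₁ βB βR ∧ FmlSat I ψ₂ βB βR
  | Fml.exR n s g ψ, βB, βR =>
      n ≤ Nat.card {a : ↥s → I.R //
        GuardSat I βB (updR βR s a) g ∧ FmlSat I ψ βB (updR βR s a)}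
  | Fml.exB n s g ψ, βB, βR =>
      n ≤ Nat.card {a : ↥s → I.B //
        GuardSat I (updB βB s a) βR g ∧ FmlSat I ψ (updB βB s a) βR}

/-- The formulas of the logic `GC^k`. -/
inductive IsGC (k : ℕ) : Fml k → Prop
  | top : IsGC k Fml.top
  | E (j : Fin k) (i : ℕ) : IsGC k (Fml.E j i)
  | beq (j j' : Fin k) : IsGC k (Fml.beq j j')
  | req (i i' : ℕ) : IsGC k (Fml.req i i')
  | not {ψ : Fml k} : IsGC k ψ → IsGC k ψ.not
  | and {ψ₁ ψ₂ : Fml k} : IsGC k ψ₁ → IsGC k ψ₂ → IsGC k (ψ₁.and ψ₂)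
  | exR {ψ : Fml k} (n : ℕ) (s : Finset ℕ) (g : GuardF k) :
      IsGC k ψ → g.dom = freeR ψ → 1 ≤ n → s.Nonempty → s ⊆ g.dom →
      IsGC k (Fml.exR n s g ψ)
  | exB {ψ : Fml k} (n : ℕ) (s : Finset (Fin k)) (g : GuardF k) :
      IsGC k ψ → g.dom = freeR ψ → 1 ≤ n → s.Nonempty → s ⊆ g.img ∪ freeB ψ →
      IsGC k (Fml.exB n s g ψ)

/-- The normal form `NGC^k`: `NGC k g ψ` expresses that `(α_g ∧ ψ)` is a formula
of the fragment `NGC^k`. -/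
inductive NGC (k : ℕ) : GuardF k → Fml k → Prop
  | E {g : GuardF k} (j : Fin k) (i : ℕ) : g.dom = {i} → NGC k g (Fml.E j i)
  | beq {g : GuardF k} (j j' : Fin k) : g.dom = ∅ → NGC k g (Fml.beq j j')
  | req {g : GuardF k} (i i' : ℕ) : g.dom = {i, i'} → NGC k g (Fml.req i i')
  | not {g : GuardF k} {ψ : Fml k} : NGC k g ψ → NGC k g ψ.not
  | and {g₁ g₂ : GuardF k} {ψ₁ ψ₂ : Fml k} :
      NGC k g₁ ψ₁ → NGC k g₂ ψ₂ → GuardF.Compatible g₁ g₂ →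
      NGC k (g₁.union g₂) (ψ₁.and ψ₂)
  | exR {g : GuardF k} {ψ : Fml k} (n : ℕ) (s : Finset ℕ) :
      NGC k g ψ → 1 ≤ n → s.Nonempty → s ⊆ g.dom →
      NGC k (g.remove s) (Fml.exR n s g ψ)
  | exB {g g' : GuardF k} {ψ : Fml k} (n : ℕ) (s : Finset (Fin k)) :
      NGC k g ψ → 1 ≤ n → s.Nonempty → s ⊆ g.img ∪ freeB ψ →
      g'.dom = g.dom →
      (∀ i ∈ g.dom, ∃ j, g'.f i = some j ∧ (g.f i = some j ∨ j ∈ s ∨ j ∉ g.img)) →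
      NGC k g' (Fml.exB n s g ψ)

/-- Indistinguishability of two incidence graphs by sentences of `GC^k`. -/
def GCEquiv (k : ℕ) (I I' : IncGraph) : Prop :=
  ∀ φ : Fml k, IsGC k φ → freeR φ = ∅ → freeB φ = ∅ →
    ((∀ βB βR, FmlSat I φ βB βR) ↔ (∀ βB βR, FmlSat I' φ βB βR))

/-! ### k-labeled incidence graphs -/

/-- A `k`-labeled incidence graph. -/
structure KLI (k : ℕ) where
  I : IncGraph
  r : ℕ → Option I.R
  b : Fin k → Option I.B
  g : GuardF k
  fin_r : {i | (r i).isSome}.Finite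

namespace KLI

variable {k : ℕ}

/-- The set of red labels used. -/
def domR (L : KLI k) : Finset ℕ := L.fin_r.toFinset

/-- The set of blue labels used. -/
def domB (L : KLI k) : Finset (Fin k) := Finset.univ.filter fun j => (L.b j).isSome

/-- `L` has real guards with respect to the partial map `f`. -/
def realGuardsWrt (L : KLI k) (f : ℕ → Option (Fin k)) : Prop :=
  ∀ i j, f i = some j → ∃ v e, L.r i = some v ∧ L.b j = some e ∧ L.I.E e v

/-- `L` has real guards. -/
def realGuards (L : KLI k) : Prop := L.realGuardsWrt L.g.f

/-- Removing red labels. -/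
def removeR (L : KLI k) (X : Finset ℕ) : KLI k where
  I := L.I
  r := fun i => if i ∈ X then none else L.r i
  b := L.b
  g := L.g.remove X
  fin_r := by
    apply L.fin_r.subset
    intro i hi
    simp only [Set.mem_setOf_eq] at hi ⊢
    by_cases h : i ∈ X
    · simp [h] at hi
    · simpa [h] using hi

/-- Removing blue labels. -/
def removeB (L : KLI k) (X : Finset (Fin k)) : KLI k where
  I := L.I
  r := L.r
  b := fun j => if j ∈ X then none else L.b j
  g := L.g
  fin_r := L.fin_r

/-- Moving the red labels in `X` onto the nodes given by `a`. -/
def reseatR (L : KLI k) (X : Finset ℕ) (a : ↥X → L.I.R) : KLI k where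
  I := L.I
  r := fun i => if h : i ∈ X then some (a ⟨i, h⟩) else L.r i
  b := L.b
  g := L.g
  fin_r := by
    apply (L.fin_r.union X.finite_toSet).subset
    intro i hi
    simp only [Set.mem_setOf_eq] at hi
    by_cases h : i ∈ X
    · exact Or.inr (by simpa using h)
    · exact Or.inl (by simpa [h] using hi)

/-- Moving the blue labels in `X` onto the nodes given by `a`. -/
def reseatB (L : KLI k) (X : Finset (Fin k)) (a : ↥X → L.I.B) : KLI k where
  I := L.I
  r := L.r
  b := fun j => if h : j ∈ X then some (a ⟨j, h⟩) else L.b j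
  g := L.g
  fin_r := L.fin_r

/-- The identifications of red nodes when glueing. -/
def glueRelR (L₁ L₂ : KLI k) : (L₁.I.R ⊕ L₂.I.R) → (L₁.I.R ⊕ L₂.I.R) → Prop :=
  fun x y => ∃ i v₁ v₂, L₁.r i = some v₁ ∧ L₂.r i = some v₂ ∧ x = Sum.inl v₁ ∧ y = Sum.inr v₂

/-- The identifications of blue nodes when glueing. -/
def glueRelB (L₁ L₂ : KLI k) : (L₁.I.B ⊕ L₂.I.B) → (L₁.I.B ⊕ L₂.I.B) → Prop :=
  fun x y => ∃ j e₁ e₂, L₁.b j = some e₁ ∧ L₂.b j = some e₂ ∧ x = Sum.inl e₁ ∧ y = Sum.inr e₂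

/-- The incidence graph underlying the glueing of two labeled incidence graphs. -/
def glueIG (L₁ L₂ : KLI k) : IncGraph where
  R := Quot (glueRelR L₁ L₂)
  B := Quot (glueRelB L₁ L₂)
  finR := Finite.of_surjective (Quot.mk (glueRelR L₁ L₂))
    (fun q => Quot.inductionOn q fun a => ⟨a, rfl⟩)
  finB := Finite.of_surjective (Quot.mk (glueRelB L₁ L₂))
    (fun q => Quot.inductionOn q fun a => ⟨a, rfl⟩)
  E := fun e v =>
    (∃ e₁ v₁, L₁.I.E e₁ v₁ ∧ e = Quot.mk (glueRelB L₁ L₂) (Sum.inl e₁) ∧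
      v = Quot.mk (glueRelR L₁ L₂) (Sum.inl v₁)) ∨
    (∃ e₂ v₂, L₂.I.E e₂ v₂ ∧ e = Quot.mk (glueRelB L₁ L₂) (Sum.inr e₂) ∧
      v = Quot.mk (glueRelR L₁ L₂) (Sum.inr v₂))
  covered := by
    intro v
    induction v using Quot.ind with
    | _ x =>
      cases x with
      | inl v₁ =>
        obtain ⟨e₁, he⟩ := L₁.I.covered v₁
        exact ⟨Quot.mk (glueRelB L₁ L₂) (Sum.inl e₁), Or.inl ⟨e₁, v₁, he, rfl, rfl⟩⟩
      | inr v₂ =>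
        obtain ⟨e₂, he⟩ := L₂.I.covered v₂
        exact ⟨Quot.mk (glueRelB L₁ L₂) (Sum.inr e₂), Or.inr ⟨e₂, v₂, he, rfl, rfl⟩⟩

/-- Glueing two `k`-labeled incidence graphs. -/
def glue (L₁ L₂ : KLI k) : KLI k where
  I := glueIG L₁ L₂
  r := fun i =>
    match L₁.r i with
    | some v => some (Quot.mk (glueRelR L₁ L₂) (Sum.inl v))
    | none => (L₂.r i).map fun v => Quot.mk (glueRelR L₁ L₂) (Sum.inr v)
  b := fun j =>
    match L₁.b j with
    | some e => some (Quot.mk (glueRelB L₁ L₂) (Sum.inl e))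
    | none => (L₂.b j).map fun e => Quot.mk (glueRelB L₁ L₂) (Sum.inr e)
  g := L₁.g.union L₂.g
  fin_r := by
    apply (L₁.fin_r.union L₂.fin_r).subset
    intro i hi
    simp only [Set.mem_setOf_eq] at hi
    cases h₁ : L₁.r i with
    | some v => exact Or.inl (by simp [h₁])
    | none =>
      right
      rw [h₁] at hi
      simp only at hi
      exact Option.isSome_map.symm.trans hi

/-- The `k`-labeled incidence graph `L^f` defined by a guard function `f`. -/
def guardKLI (f : GuardF k) : KLI k where
  I := { R := {i : ℕ // i ∈ f.dom}
         B := {j : Fin k // j ∈ f.img}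
         E := fun j i => f.f i.1 = some j.1
         covered := by
           rintro ⟨i, hi⟩
           have hs : (f.f i).isSome := GuardF.mem_dom.mp hi
           have hj : (f.f i).get hs ∈ f.img :=
             GuardF.mem_img.mpr ⟨i, (Option.some_get hs).symm⟩
           exact ⟨⟨(f.f i).get hs, hj⟩, (Option.some_get hs).symm⟩ }
  r := fun i => if h : i ∈ f.dom then some ⟨i, h⟩ else none
  b := fun j => if h : j ∈ f.img then some ⟨j, h⟩ else none
  g := f
  fin_r := by
    apply f.dom.finite_toSet.subset
    intro i hi
    simp only [Set.mem_setOf_eq] at hi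
    by_cases h : i ∈ f.dom
    · simpa using h
    · simp [h] at hi

/-- Applying a transition `f` to `L`. -/
def applyTransition (L : KLI k) (f : GuardF k) : KLI k :=
  (guardKLI f).glue (L.removeB (L.g.img ∩ f.img ∩ L.domB))

end KLI

/-- The class `GLI^k` of guarded `k`-labeled incidence graphs. -/
inductive GLI (k : ℕ) : KLI k → Prop
  | base (L : KLI k) :
      (∀ v : L.I.R, ∃ i, L.r i = some v) →
      (∀ e : L.I.B, ∃ j, L.b j = some e) →
      (∀ i, (L.r i).isSome ↔ (L.g.f i).isSome) →
      L.realGuards → GLI k L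
  | removeR (L : KLI k) (X : Finset ℕ) :
      GLI k L → (∀ i ∈ X, (L.r i).isSome) → GLI k (L.removeR X)
  | removeB (L : KLI k) (X : Finset (Fin k)) :
      GLI k L → (∀ j ∈ X, (L.b j).isSome ∧ j ∉ L.g.img) → GLI k (L.removeB X)
  | trans (L : KLI k) (f : GuardF k) :
      GLI k L → L.g.IsTransition f → GLI k (L.applyTransition f)
  | glue (L L' : KLI k) :
      GLI k L → GLI k L' → GuardF.Compatible L.g L'.g → GLI k (L.glue L')

/-- Two `k`-labeled incidence graphs are compatible. -/
def KCompatible {k : ℕ} (L L' : KLI k) : Prop :=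
  (∀ i, (L.r i).isSome ↔ (L'.r i).isSome) ∧
  (∀ j, (L.b j).isSome ↔ (L'.b j).isSome) ∧ L.g.f = L'.g.f

/-- Homomorphisms between `k`-labeled incidence graphs: they respect the labels
and ignore the guard functions. -/
def KHom {k : ℕ} (L L' : KLI k) : Type :=
  {h : (L.I.R → L'.I.R) × (L.I.B → L'.I.B) //
    (∀ e v, L.I.E e v → L'.I.E (h.2 e) (h.1 v)) ∧
    (∀ i v, L.r i = some v → L'.r i = some (h.1 v)) ∧
    (∀ j e, L.b j = some e → L'.b j = some (h.2 e))}

/-- The number of homomorphisms between `k`-labeled incidence graphs. -/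
def khom {k : ℕ} (L L' : KLI k) : ℕ := Nat.card (KHom L L')

/-! ### Quantum incidence graphs -/

/-- A formal linear combination of `k`-labeled incidence graphs, given as a list
of coefficient/component pairs. -/
abbrev QIG (k : ℕ) := List (ℝ × KLI k)

/-- `Q` is a `k`-labeled quantum incidence graph: it is a nonempty formal linear
combination of pairwise compatible `k`-labeled incidence graphs. -/
def IsQuantum {k : ℕ} (Q : QIG k) : Prop :=
  Q ≠ [] ∧ ∀ p ∈ Q, ∀ q ∈ Q, KCompatible p.2 q.2

/-- Homomorphism count from a quantum incidence graph. -/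
def qhom {k : ℕ} (Q : QIG k) (L : KLI k) : ℝ :=
  (Q.map fun p => p.1 * (khom p.2 L : ℝ)).sum

/-- Glueing of quantum incidence graphs. -/
def qglue {k : ℕ} (Q Q' : QIG k) : QIG k :=
  Q.flatMap fun p => Q'.map fun q => (p.1 * q.1, p.2.glue q.2)

/-- Componentwise removal of red labels. -/
def qremoveR {k : ℕ} (Q : QIG k) (X : Finset ℕ) : QIG k :=
  Q.map fun p => (p.1, p.2.removeR X)

/-- Componentwise removal of blue labels. -/
def qremoveB {k : ℕ} (Q : QIG k) (X : Finset (Fin k)) : QIG k :=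
  Q.map fun p => (p.1, p.2.removeB X)

/-- Componentwise application of a transition. -/
def qapplyTransition {k : ℕ} (Q : QIG k) (f : GuardF k) : QIG k :=
  Q.map fun p => (p.1, p.2.applyTransition f)

/-- Guarded quantum incidence graphs: all components belong to `GLI^k`. -/
def IsQGLI {k : ℕ} (Q : QIG k) : Prop := IsQuantum Q ∧ ∀ p ∈ Q, GLI k p.2

end

/-! A hypergraph and its simplification, whose edges are the distinct incidence sets, have the
same homomorphisms into a simple hypergraph, because such a homomorphism is determined by its
vertex map. Simplification merges edges without changing any bag, so it keeps a generalised
hypertree decomposition and can only decrease its width. Hence indistinguishability over the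
simple hypergraphs of width at most `k` already gives it over all of them. -/

namespace HGraph

def simplify (F : HGraph) : HGraph where
  V := F.V
  Edge := Set.range F.f
  f := Subtype.val
  covered v := by
    obtain ⟨e, he⟩ := F.covered v
    exact ⟨⟨F.f e, e, rfl⟩, he⟩

theorem simplify_simple (F : HGraph) : F.simplify.Simple := Subtype.val_injective

end HGraph

namespace HypHom

noncomputable def equivVertexMap {F H : HGraph} (hH : H.Simple) :
    HypHom F H ≃ {hV : F.V → H.V // ∀ e, hV '' F.f e ∈ Set.range H.f} where
  toFun h := ⟨h.1.1, fun e => ⟨h.1.2 e, h.2 e⟩⟩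
  invFun hV := ⟨(hV.1, fun e => (hV.2 e).choose), fun e => (hV.2 e).choose_spec⟩
  left_inv h := by
    refine Subtype.ext (Prod.ext rfl (funext fun e => hH ?_))
    exact (Exists.choose_spec (⟨h.1.2 e, h.2 e⟩ : ∃ e', H.f e' = _)).trans (h.2 e).symm
  right_inv _ := rfl

end HypHom

theorem hhomCount_simplify {F H : HGraph} (hH : H.Simple) :
    hhomCount F.simplify H = hhomCount F H := by
  refine Nat.card_congr (((HypHom.equivVertexMap hH).trans ?_).trans
    (HypHom.equivVertexMap hH).symm)
  exact Equiv.subtypeEquivRight fun _ => Set.forall_subtype_range_iff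

namespace GHD

def simplify {F : HGraph} (D : GHD F.inc) : GHD F.simplify.inc where
  T := D.T
  tr := D.tr
  isTree := D.isTree
  Bag := D.Bag
  Cover t := Set.rangeFactorization F.f '' D.Cover t
  complete := by
    rintro ⟨_, e, rfl⟩
    obtain ⟨t, hbag, hcover⟩ := D.complete e
    exact ⟨t, hbag, e, hcover, rfl⟩
  connR := D.connR
  covering t v hv := by
    obtain ⟨e, he, hve⟩ := Set.mem_iUnion₂.mp (D.covering t hv)
    exact Set.mem_iUnion₂.mpr ⟨_, ⟨e, he, rfl⟩, hve⟩

theorem widthLe_simplify {F : HGraph} {D : GHD F.inc} {k : ℕ} (hD : D.widthLe k) :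
    D.simplify.widthLe k := fun t =>
  (Set.ncard_image_le (Set.toFinite _)).trans (hD t)

end GHD

theorem HGraph.simplify_mem_GHWclass {k : ℕ} {F : HGraph} (hF : F ∈ GHWclass k) :
    F.simplify ∈ GHWclass k := by
  obtain ⟨D, hD⟩ := hF
  exact ⟨D.simplify, GHD.widthLe_simplify hD⟩

theorem homIndist_GHW_iff_SGHW_general (k : ℕ) (H H' : HGraph)
    (hH : H.Simple) (hH' : H'.Simple) :
    HypHomIndist (GHWclass k) H H' ↔ HypHomIndist (SGHWclass k) H H' := by
  refine ⟨fun h F hF => h F hF.2, fun h F hF => ?_⟩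
  rw [← hhomCount_simplify hH, ← hhomCount_simplify hH']
  exact h F.simplify ⟨F.simplify_simple, F.simplify_mem_GHWclass hF⟩

/-- For `k ≥ 1` and simple hypergraphs `H, H'`: homomorphism
indistinguishability over `GHW_k` coincides with homomorphism indistinguishability
over the class `SGHW_k` of simple hypergraphs of generalised hypertree width ≤ `k`. -/
theorem homIndist_GHW_iff_SGHW (k : ℕ) (hk : 1 ≤ k) (H H' : HGraph)
    (hH : H.Simple) (hH' : H'.Simple) :
    HypHomIndist (GHWclass k) H H' ↔ HypHomIndist (SGHWclass k) H H' :=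
  homIndist_GHW_iff_SGHW_general k H H' hH hH'
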